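/- Let G = (V, A) be a finite directed graph, k a positive integer, and u, v distinct vertices of G. Suppose there exists a vertex w ∈ N⁺_G(u) ∩ N⁺_G(v) such that the induced subgraph G[V \ {u, v}] contains a w-directed tree with k − 1 arcs. Then for every u-directed tree T in G with k arcs and every v-directed tree T' in G with k arcs, there exists a reconfiguration sequence between T and T' in which every intermediate subgraph is a directed tree in G with k arcs. -/

import Mathlib

/-- The vertex set of a set of arcs. -/
def arcVerts {V : Type*} [DecidableEq V] (T : Finset (V × V)) : Finset V :=
  T.image Prod.fst ∪ T.image Prod.snd

/-- The in-degree of a vertex `v` in a set of arcs `T`. -/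
def inDeg {V : Type*} [DecidableEq V] (T : Finset (V × V)) (v : V) : ℕ :=
  (T.filter fun e => e.2 = v).card

/-- The step relation of a set of arcs: `arcRel T a b` iff `(a, b)` is an arc of `T`. -/
def arcRel {V : Type*} (T : Finset (V × V)) : V → V → Prop := fun a b => (a, b) ∈ T

/-- `T` is (the arc set of) a directed tree rooted at `r`: the root has in-degree `0`,
every other vertex has in-degree exactly `1`, and every vertex is reachable from `r`. -/
def IsDirTree {V : Type*} [DecidableEq V] (T : Finset (V × V)) (r : V) : Prop :=
  inDeg T r = 0 ∧ (∀ v ∈ arcVerts T, v ≠ r → inDeg T v = 1) ∧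
    ∀ v ∈ arcVerts T, Relation.ReflTransGen (arcRel T) r v

/-- The arc set of the subgraph of `A` induced by all vertices other than `u` and `v`. -/
def inducedAvoid {V : Type*} [DecidableEq V] (A : Finset (V × V)) (u v : V) :
    Finset (V × V) :=
  A.filter fun e => e.1 ≠ u ∧ e.1 ≠ v ∧ e.2 ≠ u ∧ e.2 ≠ v

/-!
Two `r`-directed trees `T` and `S` with equally many arcs are joined by single-arc exchanges
through `r`-directed trees: take an arc `(a, b)` of `S` leaving the set of vertices reachable from
`r` along arcs common to `T` and `S`, and add it to `T` in place of the in-arc of `b`, or, when `b`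
is not a vertex of `T`, of the in-arc of a leaf of `T` outside that set; the set strictly grows.
For the roots `u ≠ v`, pass from `T` to `T'' + (u, w)`, exchange `(u, w)` for `(v, w)`, and pass
on to `T'`. When `k = 1` the two trees are distinct single arcs.
-/
open Relation Finset

section Exchange
variable {α : Type*} [DecidableEq α]

def IsExchange (X Y : Finset α) : Prop := #(X \ Y) = 1 ∧ #(Y \ X) = 1

lemma IsExchange.card_eq {X Y : Finset α} (h : IsExchange X Y) : #X = #Y := by
  obtain ⟨hXY, hYX⟩ := h
  have hX := card_sdiff_add_card_inter X Y
  have hY := card_sdiff_add_card_inter Y X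
  rw [inter_comm] at hY
  omega

lemma isExchange_insert_erase {X : Finset α} {x y : α} (hx : x ∈ X) (hy : y ∉ X) :
    IsExchange X (insert y (X.erase x)) := by
  have hxy : x ≠ y := fun h => hy (h ▸ hx)
  refine ⟨card_eq_one.2 ⟨x, ?_⟩, card_eq_one.2 ⟨y, ?_⟩⟩ <;> ext e <;>
    simp only [mem_sdiff, mem_insert, mem_erase, mem_singleton] <;> grind

lemma isExchange_insert_insert {X : Finset α} {x y : α} (hx : x ∉ X) (hy : y ∉ X)
    (hxy : x ≠ y) : IsExchange (insert x X) (insert y X) := by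
  simpa [erase_insert hx] using
    isExchange_insert_erase (mem_insert_self x X) (y := y) (by simp [hxy.symm, hy])

lemma isExchange_of_card_eq_one {X Y : Finset α} (hX : #X = 1) (hY : #Y = 1) (hXY : X ≠ Y) :
    IsExchange X Y := by
  obtain ⟨x, rfl⟩ := card_eq_one.1 hX
  obtain ⟨y, rfl⟩ := card_eq_one.1 hY
  simpa using isExchange_insert_insert (notMem_empty x) (notMem_empty y) (by grind)

end Exchange

theorem Relation.ReflTransGen.exists_seq_of_restrict {α : Type*} {P : α → Prop}
    {R : α → α → Prop} {a b : α} (h : ReflTransGen (fun x y => P x ∧ P y ∧ R x y) a b)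
    (hb : P b) : ∃ ℓ, ∃ f : ℕ → α, f 0 = a ∧ f ℓ = b ∧ (∀ i ≤ ℓ, P (f i)) ∧
      ∀ i < ℓ, R (f i) (f (i + 1)) := by
  induction h using ReflTransGen.head_induction_on with
  | refl => exact ⟨0, fun _ => b, rfl, rfl, fun _ _ => hb, by simp⟩
  | @head a c hac _ ih =>
    obtain ⟨ℓ, f, h0, hℓ, hP, hR⟩ := ih
    refine ⟨ℓ + 1, fun | 0 => a | i + 1 => f i, rfl, hℓ, ?_, ?_⟩
    · rintro (_ | i) hi
      · exact hac.1
      · exact hP i (by omega)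
    · rintro (_ | i) hi
      · simpa [h0] using hac.2.2
      · exact hR i (by omega)

theorem Relation.ReflTransGen.exists_rel_of_not {α : Type*} {r : α → α → Prop}
    {P : α → Prop} {a b : α} (h : ReflTransGen r a b) (ha : P a) (hb : ¬ P b) :
    ∃ x y, r x y ∧ P x ∧ ¬ P y := by
  induction h with
  | refl => exact absurd ha hb
  | @tail c d _ hcd ih =>
    by_cases hc : P c
    · exact ⟨c, d, hcd, hc, hb⟩
    · exact ih hc

section DirTree
variable {V : Type*} [DecidableEq V]

lemma mem_arcVerts {T : Finset (V × V)} {x : V} :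
    x ∈ arcVerts T ↔ ∃ e ∈ T, e.1 = x ∨ e.2 = x := by
  simp only [arcVerts, mem_union, mem_image]
  grind

lemma fst_mem_arcVerts {T : Finset (V × V)} {e : V × V} (he : e ∈ T) : e.1 ∈ arcVerts T :=
  mem_arcVerts.2 ⟨e, he, .inl rfl⟩

lemma snd_mem_arcVerts {T : Finset (V × V)} {e : V × V} (he : e ∈ T) : e.2 ∈ arcVerts T :=
  mem_arcVerts.2 ⟨e, he, .inr rfl⟩

lemma arcVerts_mono {S T : Finset (V × V)} (h : S ⊆ T) : arcVerts S ⊆ arcVerts T :=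
  union_subset_union (image_subset_image h) (image_subset_image h)

lemma inDeg_eq_zero_iff {T : Finset (V × V)} {v : V} :
    inDeg T v = 0 ↔ ∀ e ∈ T, e.2 ≠ v := by
  simp [inDeg, filter_eq_empty_iff]

theorem isDirTree_iff {T : Finset (V × V)} {r : V} :
    IsDirTree T r ↔ (∀ e ∈ T, e.2 ≠ r) ∧ Set.InjOn Prod.snd (T : Set (V × V)) ∧
      ∀ e ∈ T, ReflTransGen (arcRel T) r e.1 := by
  constructor
  · rintro ⟨hr, hdeg, hreach⟩
    refine ⟨inDeg_eq_zero_iff.1 hr, fun e he e' he' hee' => ?_, fun e he =>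
      hreach _ (fst_mem_arcVerts he)⟩
    have hne : e.2 ≠ r := inDeg_eq_zero_iff.1 hr e he
    exact card_le_one.1 (hdeg _ (snd_mem_arcVerts he) hne).le e (mem_filter.2 ⟨he, rfl⟩) e'
      (mem_filter.2 ⟨he', hee'.symm⟩)
  · rintro ⟨hr, hinj, hreach⟩
    have hreach' : ∀ v ∈ arcVerts T, ReflTransGen (arcRel T) r v := by
      intro v hv
      obtain ⟨e, he, rfl | rfl⟩ := mem_arcVerts.1 hv
      exacts [hreach e he, (hreach e he).tail he]
    refine ⟨inDeg_eq_zero_iff.2 hr, fun v hv hvr => ?_, hreach'⟩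
    obtain rfl | ⟨c, -, hcv⟩ := (hreach' v hv).cases_tail
    · exact absurd rfl hvr
    refine le_antisymm (card_le_one.2 fun e he e' he' => ?_) (card_pos.2 ⟨(c, v), ?_⟩)
    · rw [mem_filter] at he he'
      exact hinj he.1 he'.1 (he.2.trans he'.2.symm)
    · exact mem_filter.2 ⟨hcv, rfl⟩

namespace IsDirTree
variable {T : Finset (V × V)} {r : V}

lemma snd_ne_root (hT : IsDirTree T r) {e : V × V} (he : e ∈ T) : e.2 ≠ r :=
  (isDirTree_iff.1 hT).1 e he

lemma injOn_snd (hT : IsDirTree T r) : Set.InjOn Prod.snd (T : Set (V × V)) :=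
  (isDirTree_iff.1 hT).2.1

lemma reach (hT : IsDirTree T r) {v : V} (hv : v ∈ arcVerts T) :
    ReflTransGen (arcRel T) r v :=
  hT.2.2 v hv

lemma reach_fst (hT : IsDirTree T r) {e : V × V} (he : e ∈ T) :
    ReflTransGen (arcRel T) r e.1 :=
  hT.reach (fst_mem_arcVerts he)

lemma exists_arc_into (hT : IsDirTree T r) {v : V} (hv : v ∈ arcVerts T) (hvr : v ≠ r) :
    ∃ c, (c, v) ∈ T := by
  obtain rfl | ⟨c, -, hcv⟩ := (hT.reach hv).cases_tail
  exacts [absurd rfl hvr, ⟨c, hcv⟩]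

lemma root_mem_arcVerts (hT : IsDirTree T r) (hne : T.Nonempty) : r ∈ arcVerts T := by
  obtain ⟨e, he⟩ := hne
  obtain h | ⟨c, hc, -⟩ := (hT.reach_fst he).cases_head
  exacts [h ▸ fst_mem_arcVerts he, fst_mem_arcVerts hc]

lemma root_eq (hT : IsDirTree T r) {r' : V} (hT' : IsDirTree T r') (hne : T.Nonempty) :
    r = r' := by
  by_contra hrr'
  obtain ⟨c, hc⟩ := hT'.exists_arc_into (hT.root_mem_arcVerts hne) hrr'
  exact hT.snd_ne_root hc rfl

lemma mem_and_reach_fst {U : Finset (V × V)} (hT : IsDirTree T r) (hUT : U ⊆ T)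
    {e : V × V} (he : e ∈ T) (h : ReflTransGen (arcRel U) r e.2) :
    e ∈ U ∧ ReflTransGen (arcRel U) r e.1 := by
  obtain h | ⟨c, hc, hcU⟩ := h.cases_tail
  · exact absurd h (hT.snd_ne_root he)
  have : (c, e.2) = e := hT.injOn_snd (hUT hcU) he rfl
  exact this ▸ ⟨hcU, hc⟩

lemma subset_of_forall_reach {S : Finset (V × V)} (hT : IsDirTree T r)
    (h : ∀ e ∈ T, ReflTransGen (arcRel (S ∩ T)) r e.2) : T ⊆ S := fun e he =>
  (mem_inter.1 (hT.mem_and_reach_fst inter_subset_right he (h e he)).1).1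

end IsDirTree
end DirTree

section Reach
variable {V : Type*} {U W : Finset (V × V)} {e₀ : V × V} {r z : V}

lemma reach_mono (hUW : U ⊆ W) (h : ReflTransGen (arcRel U) r z) :
    ReflTransGen (arcRel W) r z :=
  ReflTransGen.mono (p := arcRel W) (fun _ _ h' => hUW h') _ _ h

lemma reach_of_reach_avoid (hUW : ∀ e ∈ U, e ≠ e₀ → e ∈ W)
    (he₀ : ¬ ReflTransGen (arcRel U) r e₀.2) (h : ReflTransGen (arcRel U) r z) :
    ReflTransGen (arcRel W) r z := by
  induction h with
  | refl => rfl
  | @tail b c hb hbc ih =>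
    refine ih.tail (hUW _ hbc ?_)
    rintro rfl
    exact he₀ (hb.tail hbc)

lemma reach_of_reach_reroute (hUW : ∀ e ∈ U, e ≠ e₀ → e ∈ W)
    (he₀ : ReflTransGen (arcRel W) r e₀.2) (h : ReflTransGen (arcRel U) r z) :
    ReflTransGen (arcRel W) r z := by
  induction h with
  | refl => rfl
  | @tail b c _ hbc ih =>
    by_cases hc : (b, c) = e₀
    · subst hc
      exact he₀
    · exact ih.tail (hUW _ hbc hc)

lemma reach_erase_of_leaf [DecidableEq V] {p q : V} (hq : ∀ e ∈ U, e.1 ≠ q)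
    (h : ReflTransGen (arcRel U) r z) (hz : z ≠ q) :
    ReflTransGen (arcRel (U.erase (p, q))) r z := by
  induction h with
  | refl => rfl
  | @tail b c _ hbc ih =>
    exact (ih (hq _ hbc)).tail (mem_erase.2 ⟨fun h => hz (congrArg Prod.snd h), hbc⟩)

end Reach

namespace IsDirTree
variable {V : Type*} [DecidableEq V] {T : Finset (V × V)} {r : V}

lemma insert_erase_arc_into (hT : IsDirTree T r) {a b c : V} (hcb : (c, b) ∈ T)
    (ha : ReflTransGen (arcRel (T.erase (c, b))) r a) :
    IsDirTree (insert (a, b) (T.erase (c, b))) r := by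
  have hsub : ∀ e ∈ T, e ≠ (c, b) → e ∈ insert (a, b) (T.erase (c, b)) :=
    fun e he hne => mem_insert_of_mem (mem_erase.2 ⟨hne, he⟩)
  have hb : ReflTransGen (arcRel (insert (a, b) (T.erase (c, b)))) r b :=
    (reach_mono (subset_insert _ _) ha).tail (mem_insert_self _ _)
  refine isDirTree_iff.2 ⟨?_, ?_, ?_⟩
  · simp only [mem_insert, mem_erase, forall_eq_or_imp]
    exact ⟨hT.snd_ne_root hcb, fun e he => hT.snd_ne_root he.2⟩
  · have hab : (a, b) ∉ T.erase (c, b) := fun h =>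
      (mem_erase.1 h).1 (hT.injOn_snd (mem_erase.1 h).2 hcb rfl)
    rw [coe_insert, Set.injOn_insert (mt mem_coe.1 hab)]
    refine ⟨hT.injOn_snd.mono (coe_subset.2 (erase_subset _ _)), ?_⟩
    rintro ⟨e, he, heb⟩
    exact (mem_erase.1 he).1 (hT.injOn_snd (mem_erase.1 he).2 hcb heb)
  · simp only [mem_insert, forall_eq_or_imp]
    exact ⟨reach_mono (subset_insert _ _) ha, fun e he =>
      reach_of_reach_reroute hsub hb (hT.reach_fst (mem_of_mem_erase he))⟩

lemma erase_leaf (hT : IsDirTree T r) {p q : V} (hq : ∀ e ∈ T, e.1 ≠ q) :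
    IsDirTree (T.erase (p, q)) r := by
  refine isDirTree_iff.2 ⟨fun e he => hT.snd_ne_root (mem_of_mem_erase he),
    hT.injOn_snd.mono (coe_subset.2 (erase_subset _ _)), fun e he => ?_⟩
  exact reach_erase_of_leaf hq (hT.reach_fst (mem_of_mem_erase he)) (hq e (mem_of_mem_erase he))

lemma insert_leaf (hT : IsDirTree T r) {a b : V} (ha : ReflTransGen (arcRel T) r a)
    (hb : b ∉ arcVerts T) (hbr : b ≠ r) : IsDirTree (insert (a, b) T) r := by
  refine isDirTree_iff.2 ⟨?_, ?_, ?_⟩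
  · simpa only [mem_insert, forall_eq_or_imp] using ⟨hbr, fun e he => hT.snd_ne_root he⟩
  · rw [coe_insert, Set.injOn_insert fun h => hb (snd_mem_arcVerts h)]
    exact ⟨hT.injOn_snd, fun ⟨e, he, (heb : e.2 = b)⟩ => hb (heb ▸ snd_mem_arcVerts he)⟩
  · simp only [mem_insert, forall_eq_or_imp]
    exact ⟨reach_mono (subset_insert _ _) ha, fun e he =>
      reach_mono (subset_insert _ _) (hT.reach_fst he)⟩

lemma insert_root (hT : IsDirTree T r) {r' : V} (hr' : r' ∉ arcVerts T) (hrr' : r ≠ r') :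
    IsDirTree (insert (r', r) T) r' := by
  refine isDirTree_iff.2 ⟨?_, ?_, ?_⟩
  · simpa only [mem_insert, forall_eq_or_imp] using
      ⟨hrr', fun e he (h : e.2 = r') => hr' (h ▸ snd_mem_arcVerts he)⟩
  · rw [coe_insert, Set.injOn_insert fun h => hr' (fst_mem_arcVerts h)]
    exact ⟨hT.injOn_snd, fun ⟨e, he, her⟩ => hT.snd_ne_root he her⟩
  · simp only [mem_insert, forall_eq_or_imp]
    exact ⟨.refl, fun e he => .head (mem_insert_self _ _)
      (reach_mono (subset_insert _ _) (hT.reach_fst he))⟩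


/-- If every vertex of `X` had an out-arc, the at least `#X` arcs with tail in `X` would all
have head in `X`, and so would the arc by which a path from `r` enters `X`; but at most `#X`
arcs have head in `X`. -/
lemma exists_leaf_mem (hT : IsDirTree T r) {X : Finset V} (hXT : X ⊆ arcVerts T)
    (hX : X.Nonempty) (hrX : r ∉ X) (hclosed : ∀ e ∈ T, e.1 ∈ X → e.2 ∈ X) :
    ∃ q ∈ X, ∀ e ∈ T, e.1 ≠ q := by
  by_contra! hout
  have hOutIn : T.filter (·.1 ∈ X) ⊆ T.filter (·.2 ∈ X) := fun e he =>
    mem_filter.2 ⟨(mem_filter.1 he).1, hclosed e (mem_filter.1 he).1 (mem_filter.1 he).2⟩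
  have hX_le : #X ≤ #(T.filter (·.1 ∈ X)) := by
    refine (card_le_card fun q hq => ?_).trans (card_image_le (f := Prod.fst))
    obtain ⟨e, he, rfl⟩ := hout q hq
    exact mem_image.2 ⟨e, mem_filter.2 ⟨he, hq⟩, rfl⟩
  have hle_X : #(T.filter (·.2 ∈ X)) ≤ #X :=
    card_le_card_of_injOn Prod.snd (fun e he => (mem_filter.1 he).2)
      (hT.injOn_snd.mono fun e he => (mem_filter.1 he).1)
  obtain ⟨x, hx⟩ := hX
  obtain ⟨a, b, hab, ha, hb⟩ :=
    (hT.reach (hXT hx)).exists_rel_of_not (P := (· ∉ X)) hrX (not_not.2 hx)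
  have hlt := card_lt_card ((ssubset_iff_of_subset hOutIn).2
    ⟨(a, b), mem_filter.2 ⟨hab, not_not.1 hb⟩, fun h => ha (mem_filter.1 h).2⟩)
  omega

end IsDirTree

section SameRoot
variable {V : Type*} [DecidableEq V]

noncomputable def unreachedCount (S T : Finset (V × V)) (r : V) : ℕ :=
  {z | z ∈ arcVerts S ∧ ¬ ReflTransGen (arcRel (T ∩ S)) r z}.ncard

lemma IsDirTree.exists_exchange_arc {S T : Finset (V × V)} {r a b : V} (hT : IsDirTree T r)
    (hTS : ¬ T ⊆ S) (ha : ReflTransGen (arcRel (T ∩ S)) r a)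
    (hb : ¬ ReflTransGen (arcRel (T ∩ S)) r b) :
    ∃ e₀ ∈ T, ¬ ReflTransGen (arcRel (T ∩ S)) r e₀.2 ∧
      IsDirTree (insert (a, b) (T.erase e₀)) r := by
  classical
  have hbr : b ≠ r := fun h => hb (h ▸ .refl)
  have ha' (e₀ : V × V) (he₀ : ¬ ReflTransGen (arcRel (T ∩ S)) r e₀.2) :
      ReflTransGen (arcRel (T.erase e₀)) r a :=
    reach_of_reach_avoid (fun e he hne => mem_erase.2 ⟨hne, (mem_inter.1 he).1⟩) he₀ ha
  by_cases hbT : b ∈ arcVerts T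
  · obtain ⟨c, hcb⟩ := hT.exists_arc_into hbT hbr
    exact ⟨(c, b), hcb, hb, hT.insert_erase_arc_into hcb (ha' _ hb)⟩
  set X := (arcVerts T).filter fun z => ¬ ReflTransGen (arcRel (T ∩ S)) r z
  have hX : X.Nonempty := by
    obtain ⟨e, he, hunr⟩ : ∃ e ∈ T, ¬ ReflTransGen (arcRel (T ∩ S)) r e.2 := by
      by_contra! h
      exact hTS (hT.subset_of_forall_reach fun e he => inter_comm T S ▸ h e he)
    exact ⟨e.2, mem_filter.2 ⟨snd_mem_arcVerts he, hunr⟩⟩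
  have hclosed : ∀ e ∈ T, e.1 ∈ X → e.2 ∈ X := fun e he h1 =>
    mem_filter.2 ⟨snd_mem_arcVerts he, fun h2 =>
      (mem_filter.1 h1).2 (hT.mem_and_reach_fst inter_subset_left he h2).2⟩
  obtain ⟨q, hqX, hq⟩ :=
    hT.exists_leaf_mem (filter_subset _ _) hX (fun h => (mem_filter.1 h).2 .refl) hclosed
  obtain ⟨hqT, hqunr⟩ := mem_filter.1 hqX
  obtain ⟨p, hpq⟩ := hT.exists_arc_into hqT fun h => hqunr (h ▸ .refl)
  exact ⟨(p, q), hpq, hqunr, (hT.erase_leaf hq).insert_leaf (ha' _ hqunr)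
    (fun h => hbT (arcVerts_mono (erase_subset _ _) h)) hbr⟩

lemma unreachedCount_insert_erase_lt {S T : Finset (V × V)} {r a b : V} {e₀ : V × V}
    (habS : (a, b) ∈ S) (ha : ReflTransGen (arcRel (T ∩ S)) r a)
    (hb : ¬ ReflTransGen (arcRel (T ∩ S)) r b)
    (he₀ : ¬ ReflTransGen (arcRel (T ∩ S)) r e₀.2) :
    unreachedCount S (insert (a, b) (T.erase e₀)) r < unreachedCount S T r := by
  set T₂ := insert (a, b) (T.erase e₀)
  have hreach (z : V) (h : ReflTransGen (arcRel (T ∩ S)) r z) :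
      ReflTransGen (arcRel (T₂ ∩ S)) r z :=
    reach_of_reach_avoid (fun e he hne => mem_inter.2 ⟨mem_insert_of_mem
      (mem_erase.2 ⟨hne, (mem_inter.1 he).1⟩), (mem_inter.1 he).2⟩) he₀ h
  have hb₂ : ReflTransGen (arcRel (T₂ ∩ S)) r b :=
    (hreach a ha).tail (mem_inter.2 ⟨mem_insert_self _ _, habS⟩)
  have hsub : {z | z ∈ arcVerts S ∧ ¬ ReflTransGen (arcRel (T₂ ∩ S)) r z} ⊆
      {z | z ∈ arcVerts S ∧ ¬ ReflTransGen (arcRel (T ∩ S)) r z} :=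
    fun z hz => ⟨hz.1, fun h => hz.2 (hreach z h)⟩
  refine Set.ncard_lt_ncard ?_ ((arcVerts S).finite_toSet.subset fun z hz => hz.1)
  exact (Set.ssubset_iff_of_subset hsub).2
    ⟨b, ⟨snd_mem_arcVerts habS, hb⟩, fun h => h.2 hb₂⟩

lemma IsDirTree.exists_exchange {S T : Finset (V × V)} {r : V} (hS : IsDirTree S r)
    (hT : IsDirTree T r) (hcard : #T = #S) (hne : T ≠ S) :
    ∃ T₂, IsDirTree T₂ r ∧ T₂ ⊆ T ∪ S ∧ IsExchange T T₂ ∧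
      unreachedCount S T₂ r < unreachedCount S T r := by
  have hTS : ¬ T ⊆ S := fun h => hne (eq_of_subset_of_card_le h hcard.ge)
  have hST : ¬ S ⊆ T := fun h => hne (eq_of_subset_of_card_le h hcard.le).symm
  obtain ⟨e, heS, he⟩ : ∃ e ∈ S, ¬ ReflTransGen (arcRel (T ∩ S)) r e.2 := by
    by_contra! h
    exact hST (hS.subset_of_forall_reach h)
  obtain ⟨a, b, habS, ha, hb⟩ := ((hS.reach_fst heS).tail heS).exists_rel_of_not
    (P := ReflTransGen (arcRel (T ∩ S)) r) .refl he
  obtain ⟨e₀, he₀T, he₀, hT₂⟩ := hT.exists_exchange_arc hTS ha hb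
  have habT : (a, b) ∉ T := fun h => hb (ha.tail (mem_inter.2 ⟨h, habS⟩))
  refine ⟨_, hT₂, ?_, isExchange_insert_erase he₀T habT,
    unreachedCount_insert_erase_lt habS ha hb he₀⟩
  exact insert_subset (mem_union_right _ habS) ((erase_subset _ _).trans subset_union_left)

def IsTreeIn (A : Finset (V × V)) (k : ℕ) (X : Finset (V × V)) : Prop :=
  X ⊆ A ∧ (∃ r, IsDirTree X r) ∧ #X = k

abbrev TreeStep (A : Finset (V × V)) (k : ℕ) (X Y : Finset (V × V)) : Prop :=
  IsTreeIn A k X ∧ IsTreeIn A k Y ∧ IsExchange X Y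

theorem IsDirTree.reflTransGen_treeStep {A S T : Finset (V × V)} {k : ℕ} {r : V}
    (hT : IsDirTree T r) (hS : IsDirTree S r) (hTA : T ⊆ A) (hSA : S ⊆ A) (hTk : #T = k)
    (hSk : #S = k) : ReflTransGen (TreeStep A k) T S := by
  by_cases hTS : T = S
  · exact hTS ▸ .refl
  obtain ⟨T₂, hT₂, hT₂TS, hex, hlt⟩ := hS.exists_exchange hT (hTk.trans hSk.symm) hTS
  have hT₂A : T₂ ⊆ A := hT₂TS.trans (union_subset hTA hSA)
  have hT₂k : #T₂ = k := hex.card_eq ▸ hTk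
  exact .head ⟨⟨hTA, ⟨r, hT⟩, hTk⟩, ⟨hT₂A, ⟨r, hT₂⟩, hT₂k⟩, hex⟩
    (hT₂.reflTransGen_treeStep hS hT₂A hSA hT₂k hSk)
termination_by unreachedCount S T r

end SameRoot

lemma notMem_arcVerts_of_subset_inducedAvoid {V : Type*} [DecidableEq V]
    {A T : Finset (V × V)} {u v : V} (hT : T ⊆ inducedAvoid A u v) :
    u ∉ arcVerts T ∧ v ∉ arcVerts T := by
  have h (e : V × V) (he : e ∈ T) := (mem_filter.1 (hT he)).2
  simp only [mem_arcVerts, not_exists, not_and, not_or]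
  exact ⟨fun e he => ⟨(h e he).1, (h e he).2.2.1⟩,
    fun e he => ⟨(h e he).2.1, (h e he).2.2.2⟩⟩

theorem stmt11_general {V : Type*} [DecidableEq V] (A : Finset (V × V))
    (k : ℕ) (hk : 0 < k) (u v : V) (huv : u ≠ v)
    (hw : ∃ w, (u, w) ∈ A ∧ (v, w) ∈ A ∧
      ∃ T'', T'' ⊆ inducedAvoid A u v ∧ IsDirTree T'' w ∧ T''.card = k - 1)
    (T T' : Finset (V × V)) (hTA : T ⊆ A) (hT'A : T' ⊆ A)
    (hT : IsDirTree T u) (hT' : IsDirTree T' v)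
    (hkT : T.card = k) (hkT' : T'.card = k) :
    ∃ ℓ, ∃ f : ℕ → Finset (V × V), f 0 = T ∧ f ℓ = T' ∧
      (∀ i ≤ ℓ, f i ⊆ A ∧ (∃ r, IsDirTree (f i) r) ∧ (f i).card = k) ∧
      (∀ i < ℓ, (f i \ f (i + 1)).card = 1 ∧ (f (i + 1) \ f i).card = 1) := by
  obtain ⟨w, huwA, hvwA, T'', hT''A, hT'', hT''k⟩ := hw
  suffices h : ReflTransGen (TreeStep A k) T T' from
    h.exists_seq_of_restrict ⟨hT'A, ⟨v, hT'⟩, hkT'⟩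
  rcases T''.eq_empty_or_nonempty with rfl | hne
  · obtain rfl : k = 1 := by simp at hT''k; omega
    refine .single ⟨⟨hTA, ⟨u, hT⟩, hkT⟩, ⟨hT'A, ⟨v, hT'⟩, hkT'⟩, ?_⟩
    refine isExchange_of_card_eq_one hkT hkT' fun h => huv (hT.root_eq (h ▸ hT') ?_)
    exact card_pos.1 (by omega)
  have hM {x : V} (hx : x ∉ arcVerts T'') (hxw : (x, w) ∈ A) :
      IsDirTree (insert (x, w) T'') x ∧ insert (x, w) T'' ⊆ A ∧ #(insert (x, w) T'') = k := by
    have hw := hT''.root_mem_arcVerts hne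
    refine ⟨hT''.insert_root hx fun h => hx (h ▸ hw),
      insert_subset hxw (hT''A.trans (filter_subset _ _)), ?_⟩
    rw [card_insert_of_notMem fun h => hx (fst_mem_arcVerts h), hT''k]
    have := hne.card_pos
    omega
  obtain ⟨hu, hv⟩ := notMem_arcVerts_of_subset_inducedAvoid hT''A
  obtain ⟨hU, hUA, hUk⟩ := hM hu huwA
  obtain ⟨hV, hVA, hVk⟩ := hM hv hvwA
  have hUV := isExchange_insert_insert (fun h => hu (fst_mem_arcVerts h))
    (fun h => hv (fst_mem_arcVerts h)) (x := (u, w)) (y := (v, w)) (by simpa using huv)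
  exact (hT.reflTransGen_treeStep hU hTA hUA hkT hUk).trans
    (.head ⟨⟨hUA, ⟨u, hU⟩, hUk⟩, ⟨hVA, ⟨v, hV⟩, hVk⟩, hUV⟩
      (hV.reflTransGen_treeStep hT' hVA hT'A hVk hkT'))

/-- If `u ≠ v` and there is a common out-neighbor `w` of `u` and `v` such that
`G[V ∖ {u, v}]` contains a `w`-directed tree with `k - 1` arcs, then any `u`-directed
tree with `k` arcs and any `v`-directed tree with `k` arcs in `G` are connected by a
reconfiguration sequence of directed trees with `k` arcs in `G`. -/
theorem stmt11 {V : Type*} [Fintype V] [DecidableEq V] (A : Finset (V × V))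
    (k : ℕ) (hk : 0 < k) (u v : V) (huv : u ≠ v)
    (hw : ∃ w, (u, w) ∈ A ∧ (v, w) ∈ A ∧
      ∃ T'', T'' ⊆ inducedAvoid A u v ∧ IsDirTree T'' w ∧ T''.card = k - 1)
    (T T' : Finset (V × V)) (hTA : T ⊆ A) (hT'A : T' ⊆ A)
    (hT : IsDirTree T u) (hT' : IsDirTree T' v)
    (hkT : T.card = k) (hkT' : T'.card = k) :
    ∃ ℓ, ∃ f : ℕ → Finset (V × V), f 0 = T ∧ f ℓ = T' ∧
      (∀ i ≤ ℓ, f i ⊆ A ∧ (∃ r, IsDirTree (f i) r) ∧ (f i).card = k) ∧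
      (∀ i < ℓ, (f i \ f (i + 1)).card = 1 ∧ (f (i + 1) \ f i).card = 1) :=
  stmt11_general A k hk u v huv hw T T' hTA hT'A hT hT' hkT hkT'
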